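/- arXiv:1305.5828 — 2 statements merged into one kernel-verified Lean document; each statement's English description precedes it below -/
import Mathlib

section
/- Let H, G be real Hilbert spaces, f ∈ Γ₀(H), L : H → G bounded linear, with 0 ∈ sri(ran L* − dom f*). Then ∂(L ▷ f) = L ▷ ∂f, i.e., the subdifferential of the infimal postcomposition equals the parallel composition of the subdifferential. -/
open scoped Pointwise RealInnerProductSpace

noncomputable section

/-- Inverse of a set-valued operator (graph reversal). -/
def SVInv {α β : Type*} (A : α → Set β) : β → Set α := fun u => {x | u ∈ A x}

/-- Range of a set-valued operator. -/
def SVRan {α β : Type*} (A : α → Set β) : Set β := ⋃ x, A x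

/-- Parallel sum of set-valued operators: `A □ B = (A⁻¹ + B⁻¹)⁻¹`. -/
def parSum {α : Type*} [Add α] (A B : α → Set α) : α → Set α :=
  SVInv fun u => SVInv A u + SVInv B u

/-- Parallel composition of `A` by `L`: `L ▷ A = (L ∘ A⁻¹ ∘ L*)⁻¹`. -/
def parComp {H G : Type*} [NormedAddCommGroup H] [InnerProductSpace ℝ H] [CompleteSpace H]
    [NormedAddCommGroup G] [InnerProductSpace ℝ G] [CompleteSpace G]
    (L : H →L[ℝ] G) (A : H → Set H) : G → Set G :=
  SVInv fun v => L '' SVInv A (ContinuousLinearMap.adjoint L v)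

/-- Monotonicity of a set-valued operator. -/
def IsMonotoneOp {H : Type*} [NormedAddCommGroup H] [InnerProductSpace ℝ H]
    (A : H → Set H) : Prop :=
  ∀ x y u v, u ∈ A x → v ∈ A y → (0:ℝ) ≤ ⟪x - y, u - v⟫

/-- Maximal monotonicity: no monotone operator has a strictly larger graph. -/
def IsMaxMonotoneOp {H : Type*} [NormedAddCommGroup H] [InnerProductSpace ℝ H]
    (A : H → Set H) : Prop :=
  IsMonotoneOp A ∧ ∀ B : H → Set H, IsMonotoneOp B → (∀ x, A x ⊆ B x) → B = A

/-- The cone generated by a set. -/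
def coneGen {H : Type*} [AddCommGroup H] [Module ℝ H] (D : Set H) : Set H :=
  {z | ∃ c : ℝ, 0 ≤ c ∧ ∃ y ∈ D, z = c • y}

/-- The cone generated by `D` is a closed vector subspace. -/
def IsClosedSubspaceCone {H : Type*} [NormedAddCommGroup H] [Module ℝ H]
    (D : Set H) : Prop :=
  ∃ S : Submodule ℝ H, IsClosed (S : Set H) ∧ coneGen D = ↑S

/-- Effective domain of an `EReal`-valued function. -/
def effDom {H : Type*} (f : H → EReal) : Set H := {x | f x ≠ ⊤}

/-- Properness. -/
def ProperFn {H : Type*} (f : H → EReal) : Prop := (∀ x, f x ≠ ⊥) ∧ ∃ x, f x ≠ ⊤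

/-- Convexity for `EReal`-valued functions. -/
def ConvexERealFn {H : Type*} [AddCommGroup H] [Module ℝ H] (f : H → EReal) : Prop :=
  ∀ x y : H, ∀ a b : ℝ, 0 ≤ a → 0 ≤ b → a + b = 1 →
    f (a • x + b • y) ≤ (a : EReal) * f x + (b : EReal) * f y

/-- The class `Γ₀`: proper, convex, lower semicontinuous. -/
def IsGamma0 {H : Type*} [NormedAddCommGroup H] [NormedSpace ℝ H] (f : H → EReal) : Prop :=
  ProperFn f ∧ ConvexERealFn f ∧ LowerSemicontinuous f

/-- Fenchel conjugate. -/
def fconj {H : Type*} [NormedAddCommGroup H] [InnerProductSpace ℝ H]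
    (f : H → EReal) (u : H) : EReal :=
  ⨆ x, ((⟪x, u⟫ : ℝ) : EReal) - f x

/-- Infimal convolution. -/
def infConv {H : Type*} [Sub H] (f g : H → EReal) (x : H) : EReal := ⨅ y, f (x - y) + g y

/-- Infimal postcomposition `(L ▷ f)(y) = inf {f x : L x = y}`. -/
def infPost {H G : Type*} [NormedAddCommGroup H] [NormedSpace ℝ H]
    [NormedAddCommGroup G] [NormedSpace ℝ G]
    (L : H →L[ℝ] G) (f : H → EReal) (y : G) : EReal :=
  ⨅ x : {x : H // L x = y}, f x.1

/-- Convex subdifferential of an `EReal`-valued function. -/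
def subdiffFn {H : Type*} [NormedAddCommGroup H] [InnerProductSpace ℝ H]
    (f : H → EReal) (x : H) : Set H :=
  {u | ∀ y, f x + ((⟪y - x, u⟫ : ℝ) : EReal) ≤ f y}

/-- `x` belongs to the strong relative interior of `C`. -/
def sriMem {H : Type*} [NormedAddCommGroup H] [Module ℝ H] (C : Set H) (x : H) : Prop :=
  x ∈ C ∧ IsClosedSubspaceCone ((fun y => y - x) '' C)

/-!
The inclusion `L ▷ ∂f ⊆ ∂(L ▷ f)` is formal. Conversely, if `v ∈ ∂(L ▷ f)(y)` then `(L ▷ f)(y)`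
is finite, and at any `x` with `L x = y` attaining the infimum that defines `(L ▷ f)(y)` the
subgradient inequality for `v` pulls back to `L* v ∈ ∂f(x)`. So the point is that the infimum is
attained.

The qualification condition says that the cone `K` generated by `ran L* − dom f*` is a closed
subspace; it contains `ran L*` and `dom f*`. The orthogonal projection onto `K` therefore fixes
`L x` (as `Kᗮ ⊆ ker L`) and does not increase `f`: by separation from the epigraph, `f` is the
supremum of its continuous affine minorants, and their slopes lie in `dom f* ⊆ K`. On a sublevel
set of `f` inside a fibre of `L`, each functional `⟪·, z⟫` with `z ∈ K` is bounded below, so by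
the uniform boundedness principle the projected sublevel set is bounded. Finally, a decreasing
sequence of nonempty bounded closed convex sets in a Hilbert space has nonempty intersection,
since their minimal-norm points form a Cauchy sequence.
-/

open Filter Set

theorem EReal.coe_le_of_forall_le_coe {a : ℝ} {e : EReal} (h : ∀ s : ℝ, e ≤ s → a ≤ s) :
    (a : EReal) ≤ e := by
  by_contra! he
  obtain ⟨s, hes, hsa⟩ := EReal.lt_iff_exists_real_btwn.1 he
  exact (EReal.coe_lt_coe_iff.1 hsa).not_ge (h s hes.le)

theorem EReal.coe_sub_le_coe_iff {a b : ℝ} {e : EReal} :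
    (a : EReal) - e ≤ b ↔ ((a - b : ℝ) : EReal) ≤ e := by
  induction e using EReal.rec with
  | bot => simp [-EReal.coe_sub]
  | top => simp
  | coe e =>
    rw [← EReal.coe_sub, EReal.coe_le_coe_iff, EReal.coe_le_coe_iff]
    constructor <;> intro h <;> linarith

def erealEpigraph {E : Type*} (f : E → EReal) : Set (E × ℝ) := {p | f p.1 ≤ p.2}

theorem LowerSemicontinuous.isClosed_erealEpigraph {E : Type*} [TopologicalSpace E]
    {f : E → EReal} (hf : LowerSemicontinuous f) : IsClosed (erealEpigraph f) :=
  hf.isClosed_epigraph.preimage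
    (continuous_fst.prodMk (continuous_coe_real_ereal.comp continuous_snd))

section Convexity

variable {E : Type*} [AddCommGroup E] [Module ℝ E] {f : E → EReal}

theorem ConvexERealFn.le_coe_of_le (hf : ConvexERealFn f) {x y : E} {a b s t : ℝ} (ha : 0 ≤ a)
    (hb : 0 ≤ b) (hab : a + b = 1) (hx : f x ≤ s) (hy : f y ≤ t) :
    f (a • x + b • y) ≤ ((a * s + b * t : ℝ) : EReal) := by
  refine (hf x y a b ha hb hab).trans ?_
  rw [EReal.coe_add, EReal.coe_mul, EReal.coe_mul]
  exact add_le_add (mul_le_mul_of_nonneg_left hx (EReal.coe_nonneg.2 ha))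
    (mul_le_mul_of_nonneg_left hy (EReal.coe_nonneg.2 hb))

theorem ConvexERealFn.convex_sublevel (hf : ConvexERealFn f) (t : ℝ) :
    Convex ℝ {x | f x ≤ t} := by
  intro x hx y hy a b ha hb hab
  have h := hf.le_coe_of_le ha hb hab hx hy
  rwa [← add_mul, hab, one_mul] at h

theorem ConvexERealFn.convex_erealEpigraph (hf : ConvexERealFn f) :
    Convex ℝ (erealEpigraph f) := by
  rintro ⟨x, s⟩ hx ⟨y, t⟩ hy a b ha hb hab
  exact hf.le_coe_of_le ha hb hab hx hy

end Convexity

section Conjugate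

variable {H : Type*} [NormedAddCommGroup H] [InnerProductSpace ℝ H] {f : H → EReal}

theorem fconj_le_coe_iff {u : H} {β : ℝ} :
    fconj f u ≤ β ↔ ∀ x, ((⟪x, u⟫ - β : ℝ) : EReal) ≤ f x := by
  simp only [fconj, iSup_le_iff, EReal.coe_sub_le_coe_iff]

theorem mem_effDom_fconj_of_affine_minorant {d : H} {c : ℝ}
    (h : ∀ x, ((⟪x, d⟫ + c : ℝ) : EReal) ≤ f x) : d ∈ effDom (fconj f) :=
  ne_top_of_le_ne_top (EReal.coe_ne_top (-c))
    (fconj_le_coe_iff.2 fun x => by simpa only [sub_neg_eq_add] using h x)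

theorem affine_le_of_separation {d : H} {r u : ℝ} (hr : r < 0)
    (hsep : ∀ x (s : ℝ), f x ≤ s → ⟪x, d⟫ + s * r < u) (x : H) :
    ((⟪x, (-r⁻¹) • d⟫ + u / r : ℝ) : EReal) ≤ f x := by
  refine EReal.coe_le_of_forall_le_coe fun s hs => ?_
  have hx := hsep x s hs
  have e : ⟪x, (-r⁻¹) • d⟫ + u / r = (u - ⟪x, d⟫) / r := by
    rw [inner_smul_right]; ring
  rw [e, div_le_iff_of_neg hr]
  linarith

theorem ne_top_of_mem_subdiffFn {g : H → EReal} {x z u : H} (hu : u ∈ subdiffFn g x)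
    (hz : g z ≠ ⊤) : g x ≠ ⊤ := by
  intro hx
  have h := hu z
  rw [hx, EReal.top_add_coe] at h
  exact hz (top_le_iff.1 h)

end Conjugate

section AffineMinorant

variable {H : Type*} [NormedAddCommGroup H] [InnerProductSpace ℝ H] [CompleteSpace H]
  {f : H → EReal}

theorem IsGamma0.exists_separation (hf : IsGamma0 f) {x₀ : H} {t : ℝ} (ht : (t : EReal) < f x₀) :
    ∃ (d : H) (r u : ℝ), r ≤ 0 ∧ (∀ x (s : ℝ), f x ≤ s → ⟪x, d⟫ + s * r < u) ∧
      u < ⟪x₀, d⟫ + t * r := by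
  obtain ⟨φ, u, hlt, hgt⟩ := geometric_hahn_banach_closed_point hf.2.1.convex_erealEpigraph
    hf.2.2.isClosed_erealEpigraph (x := (x₀, t)) ht.not_ge
  set d := (InnerProductSpace.toDual ℝ H).symm (φ.comp (ContinuousLinearMap.inl ℝ H ℝ))
  set r := φ (0, 1)
  have hφ : ∀ x s, φ (x, s) = ⟪x, d⟫ + s * r := by
    intro x s
    have hxs : ((x, s) : H × ℝ) = (x, 0) + s • ((0 : H), (1 : ℝ)) := by simp
    rw [hxs, map_add, map_smul, smul_eq_mul, mul_comm, real_inner_comm,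
      InnerProductSpace.toDual_symm_apply]
    rfl
  refine ⟨d, r, u, ?_, fun x s hs => hφ x s ▸ hlt (x, s) hs, hφ x₀ t ▸ hgt⟩
  -- the epigraph contains upward vertical rays, on which `φ` stays below `u`
  obtain ⟨x₁, hx₁⟩ := hf.1.2
  by_contra! hr
  have hs := le_max_right (f x₁).toReal ((u - ⟪x₁, d⟫) / r)
  have hlt₁ := hφ x₁ _ ▸ hlt (x₁, _) ((EReal.le_coe_toReal hx₁).trans
    (EReal.coe_le_coe_iff.2 (le_max_left _ ((u - ⟪x₁, d⟫) / r))))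
  rw [div_le_iff₀ hr] at hs
  linarith

theorem IsGamma0.exists_affine_minorant (hf : IsGamma0 f) :
    ∃ (d : H) (c : ℝ), ∀ x, ((⟪x, d⟫ + c : ℝ) : EReal) ≤ f x := by
  obtain ⟨x₁, hx₁⟩ := hf.1.2
  have hfx₁ : f x₁ = (f x₁).toReal := (EReal.coe_toReal hx₁ (hf.1.1 x₁)).symm
  obtain ⟨d, r, u, -, hsep, hx⟩ := hf.exists_separation (x₀ := x₁) (t := (f x₁).toReal - 1)
    (by rw [hfx₁]; exact EReal.coe_lt_coe_iff.2 (sub_one_lt _))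
  have hr : r < 0 := by nlinarith [hsep x₁ _ hfx₁.le]
  exact ⟨_, _, affine_le_of_separation hr hsep⟩

theorem IsGamma0.exists_affine_minorant_gt (hf : IsGamma0 f) {x₀ : H} {t : ℝ}
    (ht : (t : EReal) < f x₀) :
    ∃ (d : H) (c : ℝ), (∀ x, ((⟪x, d⟫ + c : ℝ) : EReal) ≤ f x) ∧ t < ⟪x₀, d⟫ + c := by
  obtain ⟨d, r, u, hr, hsep, hx₀⟩ := hf.exists_separation ht
  rcases hr.lt_or_eq with hr | rfl
  · refine ⟨_, _, affine_le_of_separation hr hsep, ?_⟩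
    have e : ⟪x₀, (-r⁻¹) • d⟫ + u / r = (u - ⟪x₀, d⟫) / r := by
      rw [inner_smul_right]; ring
    rw [e, lt_div_iff_of_neg hr]
    linarith
  · -- vertical separation: tilt a global affine minorant along the separating hyperplane
    obtain ⟨d₁, c₁, h₁⟩ := hf.exists_affine_minorant
    simp only [mul_zero, add_zero] at hsep hx₀
    have hp : 0 < ⟪x₀, d⟫ - u := sub_pos.2 hx₀
    set k := (|t - (⟪x₀, d₁⟫ + c₁)| + 1) / (⟪x₀, d⟫ - u)
    have hk : 0 ≤ k := by positivity
    have hkp : k * (⟪x₀, d⟫ - u) = |t - (⟪x₀, d₁⟫ + c₁)| + 1 := div_mul_cancel₀ _ hp.ne'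
    refine ⟨d₁ + k • d, c₁ - k * u, fun x => EReal.coe_le_of_forall_le_coe fun s hs => ?_, ?_⟩
    · have h₁x := EReal.coe_le_coe_iff.1 ((h₁ x).trans hs)
      have h₂x := mul_le_mul_of_nonneg_left (hsep x s hs).le hk
      rw [inner_add_right, inner_smul_right]
      linarith
    · rw [inner_add_right, inner_smul_right]
      linarith [le_abs_self (t - (⟪x₀, d₁⟫ + c₁))]

theorem IsGamma0.apply_add_le_of_mem_orthogonal (hf : IsGamma0 f) {K : Submodule ℝ H}
    (hK : effDom (fconj f) ⊆ K) (x : H) {s : H} (hs : s ∈ Kᗮ) : f (x + s) ≤ f x := by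
  by_contra! h
  obtain ⟨t, hxt, hts⟩ := EReal.lt_iff_exists_real_btwn.1 h
  obtain ⟨d, c, hmin, hgt⟩ := hf.exists_affine_minorant_gt hts
  have hsd : ⟪s, d⟫ = 0 :=
    K.inner_left_of_mem_orthogonal (hK (mem_effDom_fconj_of_affine_minorant hmin)) hs
  rw [inner_add_left, hsd, add_zero] at hgt
  linarith [EReal.coe_lt_coe_iff.1 ((hmin x).trans_lt hxt)]

theorem IsGamma0.apply_starProjection_le (hf : IsGamma0 f) {K : Submodule ℝ H}
    [K.HasOrthogonalProjection] (hK : effDom (fconj f) ⊆ K) (x : H) :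
    f (K.starProjection x) ≤ f x := by
  have h := hf.apply_add_le_of_mem_orthogonal hK x
    (Kᗮ.neg_mem (K.sub_starProjection_mem_orthogonal x))
  rwa [neg_sub, add_sub_cancel] at h

end AffineMinorant

section Hilbert

variable {H : Type*} [NormedAddCommGroup H] [InnerProductSpace ℝ H]

theorem nonempty_iInter_of_antitone_of_convex [CompleteSpace H] {A : ℕ → Set H}
    (hanti : Antitone A) (hne : ∀ m, (A m).Nonempty) (hcl : ∀ m, IsClosed (A m))
    (hcv : ∀ m, Convex ℝ (A m)) (hbd : Bornology.IsBounded (A 0)) : (⋂ m, A m).Nonempty := by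
  choose p hpA hpmin using fun m =>
    exists_norm_eq_iInf_of_complete_convex (hne m) (hcl m).isComplete (hcv m) 0
  have hsq : ∀ m n, m ≤ n → ‖p n - p m‖ ^ 2 ≤ ‖p n‖ ^ 2 - ‖p m‖ ^ 2 := by
    intro m n hmn
    have hvar := (norm_eq_iInf_iff_real_inner_le_zero (hcv m) (hpA m)).1 (hpmin m) (p n)
      (hanti hmn (hpA n))
    rw [zero_sub, inner_neg_left, inner_sub_right, real_inner_self_eq_norm_sq] at hvar
    rw [norm_sub_sq_real, real_inner_comm]
    linarith
  obtain ⟨R, hR⟩ := hbd.exists_norm_le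
  have hmono : Monotone fun n => ‖p n‖ ^ 2 := fun m n hmn => by
    linarith [hsq m n hmn, sq_nonneg ‖p n - p m‖]
  have hbdd : BddAbove (range fun n => ‖p n‖ ^ 2) :=
    ⟨R ^ 2, forall_mem_range.2 fun n => pow_le_pow_left₀ (norm_nonneg _)
      (hR _ (hanti (Nat.zero_le n) (hpA n))) 2⟩
  have hcauchy : CauchySeq p := by
    have hsqc := Metric.cauchySeq_iff'.1 (tendsto_atTop_ciSup hmono hbdd).cauchySeq
    refine Metric.cauchySeq_iff'.2 fun ε hε => ?_
    obtain ⟨N, hN⟩ := hsqc (ε ^ 2) (by positivity)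
    refine ⟨N, fun n hn => ?_⟩
    have hdist := hN n hn
    rw [Real.dist_eq] at hdist
    rw [dist_eq_norm]
    exact lt_of_pow_lt_pow_left₀ 2 hε.le
      (by linarith [hsq N n hn, le_abs_self (‖p n‖ ^ 2 - ‖p N‖ ^ 2)])
  obtain ⟨q, hq⟩ := cauchySeq_tendsto_of_complete hcauchy
  exact ⟨q, mem_iInter.2 fun m => (hcl m).mem_of_tendsto hq
    ((eventually_ge_atTop m).mono fun n hn => hanti hn (hpA n))⟩

theorem ConvexERealFn.exists_le_of_forall_lt [CompleteSpace H] {f : H → EReal}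
    (hconv : ConvexERealFn f) (hlsc : LowerSemicontinuous f) {F : Set H} (hFcl : IsClosed F)
    (hFcv : Convex ℝ F) (hFbd : Bornology.IsBounded F) {α : ℝ}
    (h : ∀ t : ℝ, α < t → ∃ x ∈ F, f x ≤ t) : ∃ x ∈ F, f x ≤ α := by
  set A : ℕ → Set H := fun m => F ∩ {x | f x ≤ ((α + 1 / (m + 1) : ℝ) : EReal)}
  have hanti : Antitone A := fun m n hmn =>
    inter_subset_inter_right _ fun x hx => hx.trans (EReal.coe_le_coe_iff.2 (by gcongr))
  have hne : ∀ m, (A m).Nonempty := fun m =>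
    let ⟨x, hxF, hx⟩ := h _ (lt_add_of_pos_right α (by positivity))
    ⟨x, hxF, hx⟩
  obtain ⟨x, hx⟩ := nonempty_iInter_of_antitone_of_convex hanti hne
    (fun m => hFcl.inter (hlsc.isClosed_preimage _))
    (fun m => hFcv.inter (hconv.convex_sublevel _)) (hFbd.subset inter_subset_left)
  rw [mem_iInter] at hx
  have hlim : Tendsto (fun m : ℕ => ((α + 1 / (m + 1) : ℝ) : EReal)) atTop (nhds α) := by
    refine EReal.tendsto_coe.2 ?_
    simpa using (tendsto_one_div_add_atTop_nhds_zero_nat (𝕜 := ℝ)).const_add α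
  exact ⟨x, (hx 0).1, ge_of_tendsto' hlim fun m => (hx m).2⟩

theorem exists_norm_starProjection_le {K : Submodule ℝ H} [CompleteSpace K] {F : Set H}
    (h : ∀ z ∈ K, ∃ m : ℝ, ∀ x ∈ F, m ≤ ⟪x, z⟫) : ∃ R, ∀ x ∈ F, ‖K.starProjection x‖ ≤ R := by
  let g : F → K →L[ℝ] ℝ := fun x => (innerSL ℝ (x : H)).comp K.subtypeL
  have hg : ∀ x z, g x z = ⟪(x : H), z⟫ := fun _ _ => rfl
  have hpointwise : ∀ z : K, ∃ C, ∀ x, ‖g x z‖ ≤ C := by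
    intro z
    obtain ⟨m₁, h₁⟩ := h z z.2
    obtain ⟨m₂, h₂⟩ := h (-z) (K.neg_mem z.2)
    refine ⟨|m₁| + |m₂|, fun x => ?_⟩
    have hx₁ := h₁ x x.2
    have hx₂ := h₂ x x.2
    rw [inner_neg_right] at hx₂
    rw [hg, Real.norm_eq_abs, abs_le]
    constructor <;> linarith [neg_abs_le m₁, neg_le_abs m₂, abs_nonneg m₁, abs_nonneg m₂]
  obtain ⟨C, hC⟩ := banach_steinhaus hpointwise
  refine ⟨C, fun x hx => ?_⟩
  set w : K := ⟨K.starProjection x, K.starProjection_apply_mem x⟩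
  have hw : ‖(w : H)‖ ^ 2 ≤ C * ‖(w : H)‖ := calc
    ‖(w : H)‖ ^ 2 = g ⟨x, hx⟩ w := by
      have h0 := K.starProjection_inner_eq_zero x _ (K.starProjection_apply_mem x)
      rw [inner_sub_left, sub_eq_zero] at h0
      rw [hg, h0, real_inner_self_eq_norm_sq]
    _ ≤ ‖g ⟨x, hx⟩‖ * ‖w‖ := (le_abs_self _).trans ((g ⟨x, hx⟩).le_opNorm w)
    _ ≤ C * ‖(w : H)‖ := mul_le_mul_of_nonneg_right (hC _) (norm_nonneg _)
  nlinarith [norm_nonneg (w : H), norm_nonneg (g ⟨x, hx⟩), hC ⟨x, hx⟩]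

end Hilbert

theorem subset_coneGen {E : Type*} [AddCommGroup E] [Module ℝ E] (D : Set E) :
    D ⊆ coneGen D :=
  fun z hz => ⟨1, zero_le_one, z, hz, (one_smul ℝ z).symm⟩

theorem Submodule.le_and_subset_of_sub_subset {E : Type*} [AddCommGroup E] [Module ℝ E]
    {V K : Submodule ℝ E} {B : Set E} (h0 : (0 : E) ∈ (V : Set E) - B)
    (hK : (V : Set E) - B ⊆ K) : V ≤ K ∧ B ⊆ K := by
  obtain ⟨a, ha, b, hb, hab : a - b = 0⟩ := h0
  have haK : a ∈ K := by
    have h := hK (sub_mem_sub (V.add_mem ha ha) hb)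
    rwa [add_sub_assoc, hab, add_zero] at h
  refine ⟨fun v hv => ?_, fun b' hb' => ?_⟩
  · simpa [sub_eq_zero.1 hab] using K.add_mem (hK (sub_mem_sub hv hb)) haK
  · simpa using K.sub_mem haK (hK (sub_mem_sub ha hb'))

theorem infPost_le {H G : Type*} [NormedAddCommGroup H] [NormedSpace ℝ H] [NormedAddCommGroup G]
    [NormedSpace ℝ G] {L : H →L[ℝ] G} {f : H → EReal} {x : H} {y : G} (hx : L x = y) :
    infPost L f y ≤ f x :=
  iInf_le (fun p : {x // L x = y} => f p.1) ⟨x, hx⟩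

section InfPost

variable {H G : Type*} [NormedAddCommGroup H] [InnerProductSpace ℝ H] [CompleteSpace H]
  [NormedAddCommGroup G] [InnerProductSpace ℝ G] [CompleteSpace G]
  {f : H → EReal} {L : H →L[ℝ] G}

local notation "L†" => ContinuousLinearMap.adjoint L

theorem mem_parComp {A : H → Set H} {y v : G} :
    v ∈ parComp L A y ↔ ∃ x, L† v ∈ A x ∧ L x = y :=
  Iff.rfl

theorem coe_le_infPost {u : G} {β : ℝ} (hu : fconj f (L† u) ≤ β) (y : G) :
    ((⟪y, u⟫ - β : ℝ) : EReal) ≤ infPost L f y :=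
  le_iInf fun ⟨x, hx⟩ => by
    simpa [ContinuousLinearMap.adjoint_inner_right, hx] using fconj_le_coe_iff.1 hu x

theorem map_starProjection {K : Submodule ℝ H} [K.HasOrthogonalProjection]
    (hK : (L† : G →ₗ[ℝ] H).range ≤ K) (x : H) : L (K.starProjection x) = L x := by
  have hker := Submodule.orthogonal_le hK (K.sub_starProjection_mem_orthogonal x)
  rw [ContinuousLinearMap.orthogonal_range, ContinuousLinearMap.adjoint_adjoint,
    LinearMap.mem_ker, ContinuousLinearMap.coe_coe, map_sub, sub_eq_zero] at hker
  exact hker.symm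

theorem exists_le_inner_of_mem_coneGen {y : G} {β : ℝ} {z : H}
    (hz : z ∈ coneGen (range L† - effDom (fconj f))) :
    ∃ m : ℝ, ∀ x ∈ {x | L x = y ∧ f x ≤ β}, m ≤ ⟪x, z⟫ := by
  obtain ⟨c, hc, _, ⟨_, ⟨u, rfl⟩, d, hd, rfl⟩, rfl⟩ := hz
  refine ⟨c * (⟪y, u⟫ - (fconj f d).toReal - β), fun x ⟨hx, hfx⟩ => ?_⟩
  have hFY := EReal.coe_le_coe_iff.1
    ((fconj_le_coe_iff.1 (EReal.le_coe_toReal hd) x).trans hfx)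
  rw [inner_smul_right, inner_sub_right, ContinuousLinearMap.adjoint_inner_right, hx]
  exact mul_le_mul_of_nonneg_left (by linarith) hc

theorem infPost_ne_bot {u : G} (hu : L† u ∈ effDom (fconj f)) (y : G) : infPost L f y ≠ ⊥ :=
  ne_bot_of_le_ne_bot (EReal.coe_ne_bot _) (coe_le_infPost (EReal.le_coe_toReal hu) y)

theorem exists_norm_le_of_sriMem (hf : IsGamma0 f) (hq : sriMem (range L† - effDom (fconj f)) 0)
    (y : G) (β : ℝ) :
    ∃ R, ∀ x, L x = y → f x ≤ β → ∃ x', L x' = y ∧ f x' ≤ f x ∧ ‖x'‖ ≤ R := by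
  obtain ⟨h0, K, hKcl, hK⟩ := hq
  simp only [sub_zero, image_id'] at hK
  have : CompleteSpace K := hKcl.completeSpace_coe
  have hrange : ((L† : G →ₗ[ℝ] H).range : Set H) = range L† := by
    rw [LinearMap.coe_range, ContinuousLinearMap.coe_coe]
  obtain ⟨hran, hdom⟩ := Submodule.le_and_subset_of_sub_subset (hrange ▸ h0)
    (hrange ▸ hK ▸ subset_coneGen _)
  obtain ⟨R, hR⟩ := exists_norm_starProjection_le (K := K) (F := {x | L x = y ∧ f x ≤ β})
    fun z hz => exists_le_inner_of_mem_coneGen (hK ▸ hz)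
  exact ⟨R, fun x hx hfx => ⟨K.starProjection x, (map_starProjection hran x).trans hx,
    hf.apply_starProjection_le hdom x, hR x ⟨hx, hfx⟩⟩⟩

theorem exists_infPost_eq (hf : IsGamma0 f) (hq : sriMem (range L† - effDom (fconj f)) 0)
    {y : G} (hy : infPost L f y ≠ ⊤) : ∃ x, L x = y ∧ f x = infPost L f y := by
  obtain ⟨_, ⟨u₀, rfl⟩, d₀, hd₀, hu₀ : L† u₀ - d₀ = 0⟩ := hq.1
  rw [sub_eq_zero] at hu₀
  set α := (infPost L f y).toReal
  have hα : infPost L f y = α := (EReal.coe_toReal hy (infPost_ne_bot (hu₀ ▸ hd₀) y)).symm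
  obtain ⟨R, hR⟩ := exists_norm_le_of_sriMem hf hq y (α + 1)
  have hreach : ∀ t : ℝ, α < t → ∃ x ∈ {x | L x = y} ∩ Metric.closedBall 0 R, f x ≤ t := by
    intro t ht
    have hlt : infPost L f y < ((min t (α + 1) : ℝ) : EReal) :=
      hα ▸ EReal.coe_lt_coe_iff.2 (lt_min ht (lt_add_one α))
    obtain ⟨⟨x, hx⟩, hfx⟩ := iInf_lt_iff.1 hlt
    obtain ⟨x', hx', hfx', hR'⟩ :=
      hR x hx (hfx.le.trans (EReal.coe_le_coe_iff.2 (min_le_right _ _)))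
    exact ⟨x', ⟨hx', mem_closedBall_zero_iff.2 hR'⟩,
      hfx'.trans (hfx.le.trans (EReal.coe_le_coe_iff.2 (min_le_left _ _)))⟩
  obtain ⟨x, ⟨hx, -⟩, hfx⟩ := hf.2.1.exists_le_of_forall_lt hf.2.2
    ((isClosed_eq L.continuous continuous_const).inter Metric.isClosed_closedBall)
    (((convex_singleton y).linear_preimage (L : H →ₗ[ℝ] G)).inter (convex_closedBall 0 R))
    (Metric.isBounded_closedBall.subset inter_subset_right) hreach
  exact ⟨x, hx, le_antisymm (hα ▸ hfx) (infPost_le hx)⟩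

theorem mem_subdiffFn_infPost {x : H} {y v : G} (hx : L x = y) (hv : L† v ∈ subdiffFn f x) :
    v ∈ subdiffFn (infPost L f) y := by
  intro z
  refine le_iInf fun ⟨x', hx'⟩ => ?_
  have hinner : ⟪x' - x, L† v⟫ = ⟪z - y, v⟫ := by
    rw [ContinuousLinearMap.adjoint_inner_right, map_sub, hx, hx']
  calc infPost L f y + ((⟪z - y, v⟫ : ℝ) : EReal)
      ≤ f x + ((⟪x' - x, L† v⟫ : ℝ) : EReal) := by rw [hinner]; gcongr; exact infPost_le hx
    _ ≤ f x' := hv x'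

theorem adjoint_mem_subdiffFn_of_eq_infPost {x : H} {y v : G} (hx : L x = y)
    (hfx : f x = infPost L f y) (hv : v ∈ subdiffFn (infPost L f) y) :
    L† v ∈ subdiffFn f x := by
  intro z
  have hinner : ⟪z - x, L† v⟫ = ⟪L z - y, v⟫ := by
    rw [ContinuousLinearMap.adjoint_inner_right, map_sub, hx]
  calc f x + ((⟪z - x, L† v⟫ : ℝ) : EReal)
      = infPost L f y + ((⟪L z - y, v⟫ : ℝ) : EReal) := by rw [hfx, hinner]
    _ ≤ infPost L f (L z) := hv (L z)
    _ ≤ f z := infPost_le rfl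

end InfPost

/-- under the qualification `0 ∈ sri(ran L* − dom f*)`,
`∂(L ▷ f) = L ▷ ∂f`. -/
theorem subdiff_infPost {H G : Type*}
    [NormedAddCommGroup H] [InnerProductSpace ℝ H] [CompleteSpace H]
    [NormedAddCommGroup G] [InnerProductSpace ℝ G] [CompleteSpace G]
    (f : H → EReal) (L : H →L[ℝ] G) (hf : IsGamma0 f)
    (hq : sriMem (Set.range (ContinuousLinearMap.adjoint L) - effDom (fconj f)) 0) :
    subdiffFn (infPost L f) = parComp L (subdiffFn f) := by
  funext y
  ext v
  refine ⟨fun hv => ?_, fun h => ?_⟩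
  · obtain ⟨x₁, hx₁⟩ := hf.1.2
    have hy : infPost L f y ≠ ⊤ :=
      ne_top_of_mem_subdiffFn hv (ne_top_of_le_ne_top hx₁ (infPost_le rfl))
    obtain ⟨x, hx, hfx⟩ := exists_infPost_eq hf hq hy
    exact mem_parComp.2 ⟨x, adjoint_mem_subdiffFn_of_eq_infPost hx hfx hv, hx⟩
  · obtain ⟨x, hv, hx⟩ := mem_parComp.1 h
    exact mem_subdiffFn_infPost hx hv
end
end

section
/- Let H, G, K be real Hilbert spaces, A : H → 2^H, B : G → 2^G, D : K → 2^K set-valued operators, C : H → H, L : H → G, M : H → K bounded linear, z ∈ H. Suppose x̄, ȳ ∈ H, v̄ ∈ G, w̄ ∈ K satisfy: z − L*v̄ ∈ Ax̄ + Cx̄, L*v̄ = M*w̄, Lx̄ − Lȳ ∈ B⁻¹v̄, and Mȳ ∈ D⁻¹w̄. Then 0 ∈ −L((A + C)⁻¹(z − L*v̄)) + B⁻¹v̄ + L((M* ▷ D⁻¹)(L*v̄)), i.e., v̄ solves the dual inclusion. -/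
open scoped Pointwise RealInnerProductSpace

noncomputable section

theorem zero_mem_neg_add_add_of_sub_mem {α : Type*} [AddCommGroup α] {S T U : Set α} {a b : α}
    (ha : a ∈ S) (hab : a - b ∈ T) (hb : b ∈ U) : (0 : α) ∈ -S + T + U := by
  convert Set.add_mem_add (Set.add_mem_add (Set.neg_mem_neg.2 ha) hab) hb using 1
  abel

theorem mem_SVInv_image_comp {α β γ δ : Type*} {D : β → Set γ} {f : α → β} (g : γ → δ)
    {x : α} {w : γ} (h : f x ∈ SVInv D w) : x ∈ SVInv (fun u => g '' D (f u)) (g w) :=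
  Set.mem_image_of_mem g h

/-- the auxiliary system solution yields a solution of the dual
inclusion (case `r = 1` of Proposition 2.5(ii)). -/
theorem auxiliary_to_dual {H G K : Type*}
    [NormedAddCommGroup H] [InnerProductSpace ℝ H] [CompleteSpace H]
    [NormedAddCommGroup G] [InnerProductSpace ℝ G] [CompleteSpace G]
    [NormedAddCommGroup K] [InnerProductSpace ℝ K] [CompleteSpace K]
    (A : H → Set H) (B : G → Set G) (D : K → Set K) (C : H → H)
    (L : H →L[ℝ] G) (M : H →L[ℝ] K) (z : H)
    (xb yb : H) (vb : G) (wb : K)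
    (h1 : z - ContinuousLinearMap.adjoint L vb ∈ A xb + {C xb})
    (h2 : ContinuousLinearMap.adjoint L vb = ContinuousLinearMap.adjoint M wb)
    (h3 : L xb - L yb ∈ SVInv B vb)
    (h4 : M yb ∈ SVInv D wb) :
    (0 : G) ∈
      -(L '' SVInv (fun u => A u + {C u}) (z - ContinuousLinearMap.adjoint L vb)) +
      SVInv B vb +
      L '' SVInv (fun u => ContinuousLinearMap.adjoint M '' D (M u))
        (ContinuousLinearMap.adjoint L vb) := by
  have hy := mem_SVInv_image_comp (ContinuousLinearMap.adjoint M) h4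
  rw [← h2] at hy
  exact zero_mem_neg_add_add_of_sub_mem (Set.mem_image_of_mem L h1) h3
    (Set.mem_image_of_mem L hy)
end
end
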